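/- arXiv:1911.02306 — 4 statements merged into one kernel-verified Lean document; each statement's English description precedes it below -/
import Mathlib

section
/- Suppose β ∈ ℝᵖ, β₀ ∈ ℝ, ξ, ξ*, α, α* ∈ ℝⁿ, and ε ∈ ℝ satisfy the KKT complementary slackness conditions: for all i, α_i(Xᵢ:ᵀβ + β₀ − yᵢ − ε − ξᵢ) = 0 and α*_i(yᵢ − Xᵢ:ᵀβ − β₀ − ε − ξ*ᵢ) = 0, with ξᵢ ≥ 0, ξ*ᵢ ≥ 0, α_i ≥ 0, α*_i ≥ 0, and (Cν − Σᵢ(α_i + α*_i))·ε = 0. If ε > 0, then α_i · α*_i = 0 for all i, and Σᵢ(α_i + α*_i) = Cν. -/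
open Matrix BigOperators

theorem mul_eq_zero_of_complementary_slackness {R : Type*} [Semiring R] [NoZeroDivisors R]
    {a b u v : R} (ha : a * u = 0) (hb : b * v = 0) (huv : u + v ≠ 0) : a * b = 0 := by
  rcases mul_eq_zero.mp ha with ha₀ | hu
  · rw [ha₀, zero_mul]
  rcases mul_eq_zero.mp hb with hb₀ | hv
  · rw [hb₀, mul_zero]
  exact absurd (by rw [hu, hv, add_zero]) huv

theorem stmt2_general (n p : ℕ) (X : Matrix (Fin n) (Fin p) ℝ) (y : Fin n → ℝ)
    (C ν : ℝ)
    (β : Fin p → ℝ) (β₀ : ℝ) (ξ ξs α αs : Fin n → ℝ) (ε : ℝ)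
    (h1 : ∀ i, α i * (X i ⬝ᵥ β + β₀ - y i - ε - ξ i) = 0)
    (h2 : ∀ i, αs i * (y i - X i ⬝ᵥ β - β₀ - ε - ξs i) = 0)
    (hξ : ∀ i, 0 ≤ ξ i) (hξs : ∀ i, 0 ≤ ξs i)
    (hcs : (C * ν - ∑ i, (α i + αs i)) * ε = 0)
    (hε : 0 < ε) :
    (∀ i, α i * αs i = 0) ∧ ∑ i, (α i + αs i) = C * ν := by
  refine ⟨fun i => mul_eq_zero_of_complementary_slackness (h1 i) (h2 i) ?_, ?_⟩
  · -- the two residuals add up to `-(2ε + ξᵢ + ξ*ᵢ) < 0`, so they cannot both vanish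
    exact (by linarith [hξ i, hξs i] : _ < (0 : ℝ)).ne
  · exact (sub_eq_zero.mp ((mul_eq_zero.mp hcs).resolve_right hε.ne')).symm

/-- under the KKT complementary slackness conditions, if ε > 0 then
αᵢ α*ᵢ = 0 for all i and Σᵢ (αᵢ + α*ᵢ) = Cν. -/
theorem stmt2 (n p : ℕ) (X : Matrix (Fin n) (Fin p) ℝ) (y : Fin n → ℝ)
    (C ν : ℝ) (hC : 0 < C) (hν : ν ∈ Set.Ioc (0 : ℝ) 1)
    (β : Fin p → ℝ) (β₀ : ℝ) (ξ ξs α αs : Fin n → ℝ) (ε : ℝ)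
    (h1 : ∀ i, α i * (X i ⬝ᵥ β + β₀ - y i - ε - ξ i) = 0)
    (h2 : ∀ i, αs i * (y i - X i ⬝ᵥ β - β₀ - ε - ξs i) = 0)
    (hξ : ∀ i, 0 ≤ ξ i) (hξs : ∀ i, 0 ≤ ξs i)
    (hα : ∀ i, 0 ≤ α i) (hαs : ∀ i, 0 ≤ αs i)
    (hcs : (C * ν - ∑ i, (α i + αs i)) * ε = 0)
    (hε : 0 < ε) :
    (∀ i, α i * αs i = 0) ∧ ∑ i, (α i + αs i) = C * ν :=
  stmt2_general n p X y C ν β β₀ ξ ξs α αs ε h1 h2 hξ hξs hcs hε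
end

section
/- Let Q̄_{ii} > 0, suppose 0 ≤ θ_i ≤ ∇_i f(θ)/Q̄_{ii}, and let θ' be equal to θ except that its i-th coordinate is set to 0 (the clipped single-coordinate update to the boundary). Then f(θ) − f(θ') ≥ ½ Q̄_{ii} θ_i² ≥ 0. -/
/-!
Along the coordinate direction `eᵢ` the quadratic is an exact parabola:
`f(θ') = f(θ) - θᵢ ∇ᵢf(θ) + ½ Q̄ᵢᵢ θᵢ²`. The hypothesis says `Q̄ᵢᵢ θᵢ ≤ ∇ᵢf(θ)`, so for
`θᵢ ≥ 0` the linear gain `θᵢ ∇ᵢf(θ)` is at least `Q̄ᵢᵢ θᵢ²`, twice the quadratic loss.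
-/

open Matrix

/-- The quadratic f(θ) = ½ θᵀ Q̄ θ + lᵀ θ. -/
noncomputable def fq {N : ℕ} (Q : Matrix (Fin N) (Fin N) ℝ) (l θ : Fin N → ℝ) : ℝ :=
  (1 / 2) * (θ ⬝ᵥ (Q *ᵥ θ)) + l ⬝ᵥ θ

/-- The i-th partial derivative of f, ∇f(θ) = Q̄ θ + l. -/
noncomputable def gradq {N : ℕ} (Q : Matrix (Fin N) (Fin N) ℝ) (l θ : Fin N → ℝ)
    (i : Fin N) : ℝ :=
  (Q *ᵥ θ + l) i

section QuadraticExpansion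

variable {N : ℕ} {Q : Matrix (Fin N) (Fin N) ℝ} (l θ : Fin N → ℝ)

lemma fq_add (hQ : Q.IsSymm) (v : Fin N → ℝ) :
    fq Q l (θ + v) = fq Q l θ + (Q *ᵥ θ + l) ⬝ᵥ v + 1 / 2 * (v ⬝ᵥ (Q *ᵥ v)) := by
  have hcross : θ ⬝ᵥ (Q *ᵥ v) = v ⬝ᵥ (Q *ᵥ θ) := by
    rw [dotProduct_mulVec, ← vecMul_transpose, hQ.eq, dotProduct_comm]
  simp only [fq, mulVec_add, dotProduct_add, add_dotProduct, hcross, dotProduct_comm v]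
  ring

lemma fq_update (hQ : Q.IsSymm) (i : Fin N) (s : ℝ) :
    fq Q l (Function.update θ i s) =
      fq Q l θ + (s - θ i) * gradq Q l θ i + 1 / 2 * Q i i * (s - θ i) ^ 2 := by
  have hupdate : Function.update θ i s = θ + Pi.single i (s - θ i) := by
    rw [Pi.update_eq_sub_add_single, Pi.single_sub]
    abel
  rw [hupdate, fq_add l θ hQ, dotProduct_single, mulVec_single, single_dotProduct]
  simp only [gradq, Pi.smul_apply, col_apply, op_smul_eq_mul]
  ring

end QuadraticExpansion

/-- the clipped single-coordinate update to the boundary 0 decreases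
f by at least ½ Q̄ᵢᵢ θᵢ². -/
theorem stmt10 {N : ℕ} (Q : Matrix (Fin N) (Fin N) ℝ) (hQ : Q.IsSymm)
    (l θ : Fin N → ℝ) (i : Fin N) (hQii : 0 < Q i i)
    (h0 : 0 ≤ θ i) (h1 : θ i ≤ gradq Q l θ i / Q i i) :
    let θ' := Function.update θ i 0
    (1 / 2) * Q i i * (θ i) ^ 2 ≤ fq Q l θ - fq Q l θ' ∧
      0 ≤ (1 / 2) * Q i i * (θ i) ^ 2 := by
  intro θ'
  have hdecrease : fq Q l θ - fq Q l θ' = θ i * gradq Q l θ i - 1 / 2 * Q i i * θ i ^ 2 := by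
    rw [fq_update l θ hQ]
    ring
  have hcurv : Q i i * θ i ≤ gradq Q l θ i := by
    rwa [le_div_iff₀ hQii, mul_comm] at h1
  have hgain : Q i i * θ i ^ 2 ≤ θ i * gradq Q l θ i := by
    calc Q i i * θ i ^ 2 = θ i * (Q i i * θ i) := by ring
      _ ≤ θ i * gradq Q l θ i := mul_le_mul_of_nonneg_left hcurv h0
  constructor
  · linarith
  · positivity
end

section
/- Let C > 0, n ≥ 1, let i ≠ j, suppose s := Q̄_{ii} + Q̄_{jj} − 2 Q̄_{ij} > 0 and 0 ≤ θ_i, θ_j ≤ C/n. Set g := ∇_i f(θ) − ∇_j f(θ), I₁ = max(−θ_i, θ_j − C/n), I₂ = min(θ_j, C/n − θ_i), t* = min(max(I₁, −g/s), I₂), and θ' = θ + t*(e_i − e_j). Then 0 ≤ θ'_i, θ'_j ≤ C/n and (i,j) is not a violating pair at θ': it is NOT the case that θ'_i < C/n, θ'_j > 0 and ∇_i f(θ') < ∇_j f(θ'), and it is NOT the case that θ'_i > 0, θ'_j < C/n and ∇_i f(θ') > ∇_j f(θ'). -/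
/-!
Moving along `e_i - e_j` by `t` shifts `∇_i f - ∇_j f` by exactly `t s`, so the unconstrained
minimiser of `f` on that line is `t = -g/s`, where the two partial derivatives agree.
Clipping it to the box `[I₁, I₂]` can only go wrong at an endpoint: if the derivatives still
differ after the step, `t` was clipped to `I₂` (resp. `I₁`), and that endpoint pushes one of the
two coordinates onto the bound that the violating-pair condition excludes.
-/

open Matrix

section Clamp

variable {lo hi g s : ℝ}

theorem min_max_eq_right_of_add_mul_neg (hs : 0 < s)
    (h : g + min (max lo (-g / s)) hi * s < 0) : min (max lo (-g / s)) hi = hi := by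
  refine min_eq_right_iff.mpr (le_of_not_ge fun hle => h.not_ge ?_)
  rw [min_eq_left hle]
  have : -g ≤ max lo (-g / s) * s := (div_le_iff₀ hs).mp (le_max_right _ _)
  linarith

theorem min_max_eq_left_of_add_mul_pos (hs : 0 < s) (hlo : lo ≤ hi)
    (h : 0 < g + min (max lo (-g / s)) hi * s) : min (max lo (-g / s)) hi = lo := by
  have hgt : -g / s < min (max lo (-g / s)) hi := by
    rw [div_lt_iff₀ hs]
    linarith
  have hmax : max lo (-g / s) = lo := max_eq_left <| le_of_not_gt fun hlt =>
    hgt.not_ge ((min_le_left _ _).trans (max_eq_right hlt.le).le)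
  exact le_antisymm ((min_le_left _ _).trans hmax.le) (le_min (le_max_left _ _) hlo)

end Clamp

/-- The SMO step in the coordinates `a = θ_i`, `b = θ_j`, with `g + t s` the new
`∇_i f - ∇_j f` and `u = C/n`. -/
theorem clipped_pair_step {a b u g s : ℝ} (ha : a ∈ Set.Icc 0 u) (hb : b ∈ Set.Icc 0 u)
    (hs : 0 < s) :
    let t := min (max (max (-a) (b - u)) (-g / s)) (min b (u - a))
    (a + t ∈ Set.Icc 0 u ∧ b - t ∈ Set.Icc 0 u) ∧
      ¬(a + t < u ∧ 0 < b - t ∧ g + t * s < 0) ∧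
      ¬(0 < a + t ∧ b - t < u ∧ 0 < g + t * s) := by
  intro t
  obtain ⟨ha₀, ha₁⟩ := ha
  obtain ⟨hb₀, hb₁⟩ := hb
  have hlo : max (-a) (b - u) ≤ min b (u - a) := by
    apply max_le <;> apply le_min <;> linarith
  have ht_lo : max (-a) (b - u) ≤ t := le_min (le_max_left _ _) hlo
  have ht_hi : t ≤ min b (u - a) := min_le_right _ _
  obtain ⟨ht_ge_neg_a, ht_ge_b_sub_u⟩ := max_le_iff.mp ht_lo
  obtain ⟨ht_le_b, ht_le_u_sub_a⟩ := le_min_iff.mp ht_hi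
  refine ⟨⟨⟨?_, ?_⟩, ?_, ?_⟩, ?_, ?_⟩
  any_goals linarith
  · rintro ⟨ha', hb', hneg⟩
    rcases min_choice b (u - a) with h | h <;>
      rw [show t = _ from min_max_eq_right_of_add_mul_neg hs hneg, h] at ha' hb' <;> linarith
  · rintro ⟨ha', hb', hpos⟩
    rcases max_choice (-a) (b - u) with h | h <;>
      rw [show t = _ from min_max_eq_left_of_add_mul_pos hs hlo hpos, h] at ha' hb' <;> linarith

theorem gradq_add_smul_single_sub_single {N : ℕ} (Q : Matrix (Fin N) (Fin N) ℝ)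
    (l θ : Fin N → ℝ) (i j k : Fin N) (t : ℝ) :
    gradq Q l (θ + t • (Pi.single i 1 - Pi.single j 1)) k
      = gradq Q l θ k + t * (Q k i - Q k j) := by
  simp only [gradq, mulVec_add, mulVec_smul, mulVec_sub, mulVec_single, Pi.add_apply,
    Pi.smul_apply, Pi.sub_apply, smul_eq_mul, MulOpposite.op_one, one_smul, col_apply]
  ring

theorem gradq_sub_gradq_add_smul_single_sub_single {N : ℕ} {Q : Matrix (Fin N) (Fin N) ℝ}
    (hQ : Q.IsSymm) (l θ : Fin N → ℝ) (i j : Fin N) (t : ℝ) :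
    let θ' := θ + t • (Pi.single i 1 - Pi.single j 1)
    gradq Q l θ' i - gradq Q l θ' j
      = gradq Q l θ i - gradq Q l θ j + t * (Q i i + Q j j - 2 * Q i j) := by
  have hQji : Q j i = Q i j := hQ.apply i j
  simp only [gradq_add_smul_single_sub_single, hQji]
  ring

theorem stmt13_general {N : ℕ} (Q : Matrix (Fin N) (Fin N) ℝ) (hQ : Q.IsSymm)
    (l θ : Fin N → ℝ) (i j : Fin N) (hij : i ≠ j)
    (C : ℝ) (n : ℕ)
    (hs : 0 < Q i i + Q j j - 2 * Q i j)
    (hθi : θ i ∈ Set.Icc 0 (C / n)) (hθj : θ j ∈ Set.Icc 0 (C / n)) :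
    let s := Q i i + Q j j - 2 * Q i j
    let g := gradq Q l θ i - gradq Q l θ j
    let I₁ := max (-θ i) (θ j - C / n)
    let I₂ := min (θ j) (C / n - θ i)
    let tstar := min (max I₁ (-g / s)) I₂
    let θ' := θ + tstar • (Pi.single i (1 : ℝ) - Pi.single j 1)
    (θ' i ∈ Set.Icc 0 (C / n) ∧ θ' j ∈ Set.Icc 0 (C / n)) ∧
      ¬(θ' i < C / n ∧ 0 < θ' j ∧ gradq Q l θ' i < gradq Q l θ' j) ∧
      ¬(0 < θ' i ∧ θ' j < C / n ∧ gradq Q l θ' j < gradq Q l θ' i) := by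
  intro s g I₁ I₂ tstar θ'
  have hθ'i : θ' i = θ i + tstar := by simp [θ', hij]
  have hθ'j : θ' j = θ j - tstar := by simp [θ', hij.symm, sub_eq_add_neg]
  have hgrad : gradq Q l θ' i - gradq Q l θ' j = g + tstar * s :=
    gradq_sub_gradq_add_smul_single_sub_single hQ l θ i j tstar
  obtain ⟨hbox, hup, hdown⟩ := clipped_pair_step (g := g) hθi hθj hs
  rw [hθ'i, hθ'j]
  refine ⟨hbox, fun ⟨hi, hj, hlt⟩ => hup ⟨hi, hj, ?_⟩, fun ⟨hi, hj, hlt⟩ => hdown ⟨hi, hj, ?_⟩⟩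
  all_goals linarith

/-- the clipped SMO pair update keeps both coordinates in [0, C/n]
and after it (i,j) is no longer a violating pair. -/
theorem stmt13 {N : ℕ} (Q : Matrix (Fin N) (Fin N) ℝ) (hQ : Q.IsSymm)
    (l θ : Fin N → ℝ) (i j : Fin N) (hij : i ≠ j)
    (C : ℝ) (hC : 0 < C) (n : ℕ) (hn : 1 ≤ n)
    (hs : 0 < Q i i + Q j j - 2 * Q i j)
    (hθi : θ i ∈ Set.Icc 0 (C / n)) (hθj : θ j ∈ Set.Icc 0 (C / n)) :
    let s := Q i i + Q j j - 2 * Q i j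
    let g := gradq Q l θ i - gradq Q l θ j
    let I₁ := max (-θ i) (θ j - C / n)
    let I₂ := min (θ j) (C / n - θ i)
    let tstar := min (max I₁ (-g / s)) I₂
    let θ' := θ + tstar • (Pi.single i (1 : ℝ) - Pi.single j 1)
    (θ' i ∈ Set.Icc 0 (C / n) ∧ θ' j ∈ Set.Icc 0 (C / n)) ∧
      ¬(θ' i < C / n ∧ 0 < θ' j ∧ gradq Q l θ' i < gradq Q l θ' j) ∧
      ¬(0 < θ' i ∧ θ' j < C / n ∧ gradq Q l θ' j < gradq Q l θ' i) :=
  stmt13_general Q hQ l θ i j hij C n hs hθi hθj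
end

section
/- Let θ = (α, α*, γ, μ) be dual feasible and let (β°, β₀°, ξ°, ξ*°, ε°) be primal feasible. Then ⟨β(θ), β°⟩ ≥ −γᵀ b + μᵀ d − Σᵢ (α_i − α*_i) yᵢ − ε° C ν − Σᵢ (α_i ξ°ᵢ + α*_i ξ*°ᵢ). -/
open Matrix

/-! This is weak duality for the constrained ν-SVR. Pairing `β(θ)` with `β°` produces
`-(α - α*)ᵀ X β° - γᵀ A β° + μᵀ Γ β°`. The equality constraint turns the last term into `μᵀ d`,
and `γ ≥ 0` with `A β° ≤ b` gives `γᵀ A β° ≤ γᵀ b`. Since `Σ (αᵢ - α*ᵢ) = 0`, the intercept may be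
added to the first term for free; weighting the two ε-insensitive constraints of sample `i` by
`αᵢ, α*ᵢ ≥ 0` then bounds each summand, and the ε-part sums to `ε° Σ (αᵢ + α*ᵢ) ≤ ε° C ν`. -/

section

variable {ι κ₁ κ₂ m R : Type*} [Fintype ι] [Fintype κ₁] [Fintype κ₂] [Fintype m]

theorem dual_vector_dotProduct [CommRing R] (X : Matrix ι m R) (A : Matrix κ₁ m R)
    (Γ : Matrix κ₂ m R) (w : ι → R) (γ : κ₁ → R) (μ : κ₂ → R) (β : m → R) :
    (-(Xᵀ *ᵥ w) - Aᵀ *ᵥ γ + Γᵀ *ᵥ μ) ⬝ᵥ β =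
      -(w ⬝ᵥ X *ᵥ β) - γ ⬝ᵥ A *ᵥ β + μ ⬝ᵥ Γ *ᵥ β := by
  rw [dotProduct_comm, dotProduct_add, dotProduct_sub, dotProduct_neg,
    dotProduct_transpose_mulVec, dotProduct_transpose_mulVec, dotProduct_transpose_mulVec]

theorem sub_mul_le_of_two_sided_slack [CommRing R] [LinearOrder R] [IsStrictOrderedRing R]
    {a a' f t ε ξ ξ' : R} (ha : 0 ≤ a) (ha' : 0 ≤ a') (hup : f - t ≤ ε + ξ)
    (hdown : t - f ≤ ε + ξ') :
    (a - a') * f ≤ (a - a') * t + ε * (a + a') + (a * ξ + a' * ξ') := by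
  linarith [mul_le_mul_of_nonneg_left hup ha, mul_le_mul_of_nonneg_left hdown ha']

theorem sub_dotProduct_mulVec_le [CommRing R] [LinearOrder R] [IsStrictOrderedRing R]
    (X : Matrix ι m R) (y : ι → R) (β : m → R) (β₀ ε : R) (ξ ξ' α α' : ι → R)
    (hα : ∀ i, 0 ≤ α i) (hα' : ∀ i, 0 ≤ α' i) (hbal : ∑ i, (α i - α' i) = 0)
    (hup : ∀ i, X i ⬝ᵥ β + β₀ - y i ≤ ε + ξ i) (hdown : ∀ i, y i - X i ⬝ᵥ β - β₀ ≤ ε + ξ' i) :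
    (α - α') ⬝ᵥ X *ᵥ β ≤
      ∑ i, (α i - α' i) * y i + ε * ∑ i, (α i + α' i) + ∑ i, (α i * ξ i + α' i * ξ' i) := by
  have hintercept : (α - α') ⬝ᵥ X *ᵥ β = ∑ i, (α i - α' i) * (X i ⬝ᵥ β + β₀) := by
    simp only [mul_add, Finset.sum_add_distrib, ← Finset.sum_mul, hbal, zero_mul, add_zero]
    rfl
  rw [hintercept, Finset.mul_sum, ← Finset.sum_add_distrib, ← Finset.sum_add_distrib]
  exact Finset.sum_le_sum fun i _ =>
    sub_mul_le_of_two_sided_slack (hα i) (hα' i) (hup i) (by linarith [hdown i])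

end

theorem stmt15_general (n p k₁ k₂ : ℕ) (X : Matrix (Fin n) (Fin p) ℝ) (y : Fin n → ℝ)
    (A : Matrix (Fin k₁) (Fin p) ℝ) (Γ : Matrix (Fin k₂) (Fin p) ℝ)
    (b : Fin k₁ → ℝ) (d : Fin k₂ → ℝ) (C ν : ℝ)
    (α αs : Fin n → ℝ) (γ : Fin k₁ → ℝ) (μ : Fin k₂ → ℝ)
    (hα : ∀ i, 0 ≤ α i ∧ α i ≤ C / n) (hαs : ∀ i, 0 ≤ αs i ∧ αs i ≤ C / n)
    (hsum : ∑ i, (α i + αs i) ≤ C * ν) (hzero : ∑ i, (α i - αs i) = 0)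
    (hγ : ∀ j, 0 ≤ γ j)
    (βopt : Fin p → ℝ) (β₀opt : ℝ) (ξopt ξsopt : Fin n → ℝ) (εopt : ℝ)
    (hp1 : ∀ i, X i ⬝ᵥ βopt + β₀opt - y i ≤ εopt + ξopt i)
    (hp2 : ∀ i, y i - X i ⬝ᵥ βopt - β₀opt ≤ εopt + ξsopt i)
    (hp5 : 0 ≤ εopt)
    (hp6 : ∀ j, (A *ᵥ βopt) j ≤ b j) (hp7 : Γ *ᵥ βopt = d) :
    (-(Xᵀ *ᵥ (α - αs)) - Aᵀ *ᵥ γ + Γᵀ *ᵥ μ) ⬝ᵥ βopt ≥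
      -(γ ⬝ᵥ b) + μ ⬝ᵥ d - (∑ i, (α i - αs i) * y i) - εopt * C * ν
        - ∑ i, (α i * ξopt i + αs i * ξsopt i) := by
  rw [ge_iff_le, dual_vector_dotProduct, hp7]
  have hregression := sub_dotProduct_mulVec_le X y βopt β₀opt εopt ξopt ξsopt α αs
    (fun i => (hα i).1) (fun i => (hαs i).1) hzero hp1 hp2
  have hinequality : γ ⬝ᵥ A *ᵥ βopt ≤ γ ⬝ᵥ b := dotProduct_le_dotProduct_of_nonneg_left hp6 hγ
  have hmargin : εopt * ∑ i, (α i + αs i) ≤ εopt * C * ν := by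
    rw [mul_assoc]
    exact mul_le_mul_of_nonneg_left hsum hp5
  linarith

/-- for any dual feasible (α, α*, γ, μ) and any primal feasible
(β°, β₀°, ξ°, ξ*°, ε°), the inner product ⟨β(θ), β°⟩ is bounded below:
⟨β(θ), β°⟩ ≥ −γᵀb + μᵀd − Σᵢ(αᵢ − α*ᵢ)yᵢ − ε°Cν − Σᵢ(αᵢξ°ᵢ + α*ᵢξ*°ᵢ). -/
theorem stmt15 (n p k₁ k₂ : ℕ) (X : Matrix (Fin n) (Fin p) ℝ) (y : Fin n → ℝ)
    (A : Matrix (Fin k₁) (Fin p) ℝ) (Γ : Matrix (Fin k₂) (Fin p) ℝ)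
    (b : Fin k₁ → ℝ) (d : Fin k₂ → ℝ) (C ν : ℝ)
    (hC : 0 < C) (hν : ν ∈ Set.Ioc (0 : ℝ) 1)
    (α αs : Fin n → ℝ) (γ : Fin k₁ → ℝ) (μ : Fin k₂ → ℝ)
    (hα : ∀ i, 0 ≤ α i ∧ α i ≤ C / n) (hαs : ∀ i, 0 ≤ αs i ∧ αs i ≤ C / n)
    (hsum : ∑ i, (α i + αs i) ≤ C * ν) (hzero : ∑ i, (α i - αs i) = 0)
    (hγ : ∀ j, 0 ≤ γ j)
    (βopt : Fin p → ℝ) (β₀opt : ℝ) (ξopt ξsopt : Fin n → ℝ) (εopt : ℝ)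
    (hp1 : ∀ i, X i ⬝ᵥ βopt + β₀opt - y i ≤ εopt + ξopt i)
    (hp2 : ∀ i, y i - X i ⬝ᵥ βopt - β₀opt ≤ εopt + ξsopt i)
    (hp3 : ∀ i, 0 ≤ ξopt i) (hp4 : ∀ i, 0 ≤ ξsopt i) (hp5 : 0 ≤ εopt)
    (hp6 : ∀ j, (A *ᵥ βopt) j ≤ b j) (hp7 : Γ *ᵥ βopt = d) :
    (-(Xᵀ *ᵥ (α - αs)) - Aᵀ *ᵥ γ + Γᵀ *ᵥ μ) ⬝ᵥ βopt ≥
      -(γ ⬝ᵥ b) + μ ⬝ᵥ d - (∑ i, (α i - αs i) * y i) - εopt * C * ν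
        - ∑ i, (α i * ξopt i + αs i * ξsopt i) :=
  stmt15_general n p k₁ k₂ X y A Γ b d C ν α αs γ μ hα hαs hsum hzero hγ βopt β₀opt ξopt ξsopt εopt
    hp1 hp2 hp5 hp6 hp7
end
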